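/- arXiv:1708.01374 — 2 statements merged into one kernel-verified Lean document; each statement's English description precedes it below -/
import Mathlib

section
/- With J₁ = (x₂², x₂x₃^q, x₃^{q+1}) in k[x₂,x₃], for all m ≥ 1 one has the colon ideal containment (J₁^{m+2} : x₃^{2q+1}) ⊆ J₁^m. -/
/-!
`J₁^m` is the monomial ideal spanned by the `x₂^{2a+b} x₃^{qb+(q+1)c}` with `a + b + c = m`, and a
polynomial lies in a monomial ideal iff every monomial of its support is divisible by a generator.
So it suffices that whenever a generator of `J₁^{m+2}` divides `x^d x₃^{2q+1}`, some generator of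
`J₁^m` divides `x^d`. Removing `x₃^{2q+1}` costs at most two generators: drop two copies of
`x₃^{q+1}`, or one `x₃^{q+1}` and one `x₂x₃^q`, or, when no `x₃^{q+1}` occurs, trade three copies
of `x₂x₃^q` for one `x₂²`. In the remaining cases `x₂^{2m}` already divides `x^d`.
-/

noncomputable section
open MvPolynomial

variable {k : Type*} [Field k]

/-- `J₁ = (x₂², x₂x₃^q, x₃^{q+1})` in `T' = k[x₂,x₃]` (variables `X 0 = x₂`, `X 1 = x₃`). -/
def J1 (k : Type*) [Field k] (q : ℕ) : Ideal (MvPolynomial (Fin 2) k) :=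
  Ideal.span {X 0 ^ 2, X 0 * X 1 ^ q, X 1 ^ (q + 1)}

/-- `J₂ = (x₃^{2q+1})`. -/
def J2 (k : Type*) [Field k] (q : ℕ) : Ideal (MvPolynomial (Fin 2) k) :=
  Ideal.span {X 1 ^ (2 * q + 1)}

/-- `Iₙ = Σ_{a₁+2a₂=n} J₁^{a₁} J₂^{a₂}` (so `I₀ = T'`). -/
def filtI (k : Type*) [Field k] (q n : ℕ) : Ideal (MvPolynomial (Fin 2) k) :=
  ⨆ (a : ℕ × ℕ) (_ : a.1 + 2 * a.2 = n), J1 k q ^ a.1 * J2 k q ^ a.2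

open Pointwise

namespace MvPolynomial

variable {σ R : Type*} [CommSemiring R]

theorem span_monomial_image_mul_span_monomial_image (S T : Set (σ →₀ ℕ)) :
    Ideal.span ((fun s => monomial s (1 : R)) '' S) * Ideal.span ((fun s => monomial s 1) '' T) =
      Ideal.span ((fun s => monomial s 1) '' (S + T)) := by
  rw [Ideal.span_mul_span']
  congr 1
  ext p
  constructor
  · rintro ⟨_, ⟨s, hs, rfl⟩, _, ⟨t, ht, rfl⟩, rfl⟩
    exact ⟨s + t, Set.add_mem_add hs ht, by simp [monomial_mul]⟩
  · rintro ⟨_, ⟨s, hs, t, ht, rfl⟩, rfl⟩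
    exact ⟨_, ⟨s, hs, rfl⟩, _, ⟨t, ht, rfl⟩, by simp [monomial_mul]⟩

theorem colon_span_monomial_image_le {S T : Set (σ →₀ ℕ)} {e : σ →₀ ℕ}
    (h : ∀ d, (∃ s ∈ S, s ≤ d + e) → ∃ t ∈ T, t ≤ d) :
    (Ideal.span ((fun s => monomial s (1 : R)) '' S)).colon
        ((Ideal.span {monomial e 1} : Ideal (MvPolynomial σ R)) : Set (MvPolynomial σ R)) ≤
      Ideal.span ((fun s => monomial s 1) '' T) := by
  intro f hf
  rw [Ideal.mem_colon_span_singleton, mem_ideal_span_monomial_image] at hf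
  rw [mem_ideal_span_monomial_image]
  refine fun d hd => h d (hf _ ?_)
  rw [mem_support_iff, coeff_mul_monomial, mul_one]
  exact mem_support_iff.mp hd

end MvPolynomial

def J1Exponent (q a b c : ℕ) : Fin 2 →₀ ℕ :=
  Finsupp.single 0 (2 * a + b) + Finsupp.single 1 (q * b + (q + 1) * c)

def J1Exponents (q m : ℕ) : Set (Fin 2 →₀ ℕ) :=
  {d | ∃ a b c : ℕ, a + b + c = m ∧ J1Exponent q a b c = d}

section J1Exponent

variable {q : ℕ}

theorem J1Exponent_add (a b c a' b' c' : ℕ) :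
    J1Exponent q a b c + J1Exponent q a' b' c' = J1Exponent q (a + a') (b + b') (c + c') := by
  ext i
  fin_cases i <;> simp [J1Exponent] <;> ring

theorem J1Exponent_le_iff {a b c : ℕ} {d : Fin 2 →₀ ℕ} :
    J1Exponent q a b c ≤ d ↔ 2 * a + b ≤ d 0 ∧ q * b + (q + 1) * c ≤ d 1 := by
  simp [J1Exponent, Finsupp.le_def, Fin.forall_fin_two]

theorem monomial_J1Exponent {R : Type*} [CommSemiring R] (a b c : ℕ) :
    monomial (J1Exponent q a b c) (1 : R) = X 0 ^ (2 * a + b) * X 1 ^ (q * b + (q + 1) * c) := by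
  simp [J1Exponent, X_pow_eq_monomial, monomial_mul]

theorem J1Exponents_zero : J1Exponents q 0 = {0} := by
  ext d
  simp only [J1Exponents, Nat.add_eq_zero_iff, Set.mem_ofPred_eq, Set.mem_singleton_iff]
  constructor
  · rintro ⟨a, b, c, ⟨⟨rfl, rfl⟩, rfl⟩, rfl⟩
    simp [J1Exponent]
  · rintro rfl
    exact ⟨0, 0, 0, by simp, by simp [J1Exponent]⟩

theorem J1Exponents_one :
    J1Exponents q 1 = {J1Exponent q 1 0 0, J1Exponent q 0 1 0, J1Exponent q 0 0 1} := by
  ext d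
  constructor
  · rintro ⟨a, b, c, habc, rfl⟩
    rcases (by omega : (a = 1 ∧ b = 0 ∧ c = 0) ∨ (a = 0 ∧ b = 1 ∧ c = 0) ∨
        (a = 0 ∧ b = 0 ∧ c = 1)) with ⟨rfl, rfl, rfl⟩ | ⟨rfl, rfl, rfl⟩ | ⟨rfl, rfl, rfl⟩ <;>
      simp
  · rintro (rfl | rfl | rfl)
    exacts [⟨1, 0, 0, rfl, rfl⟩, ⟨0, 1, 0, rfl, rfl⟩, ⟨0, 0, 1, rfl, rfl⟩]

theorem J1Exponents_succ (m : ℕ) : J1Exponents q (m + 1) = J1Exponents q m + J1Exponents q 1 := by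
  ext d
  constructor
  · rintro ⟨a, b, c, habc, rfl⟩
    rcases (by omega : 0 < a ∨ 0 < b ∨ 0 < c) with ha | hb | hc
    · refine ⟨_, ⟨a - 1, b, c, by omega, rfl⟩, _, ⟨1, 0, 0, rfl, rfl⟩, ?_⟩
      exact (J1Exponent_add ..).trans (by rw [Nat.sub_add_cancel ha]; rfl)
    · refine ⟨_, ⟨a, b - 1, c, by omega, rfl⟩, _, ⟨0, 1, 0, rfl, rfl⟩, ?_⟩
      exact (J1Exponent_add ..).trans (by rw [Nat.sub_add_cancel hb]; rfl)
    · refine ⟨_, ⟨a, b, c - 1, by omega, rfl⟩, _, ⟨0, 0, 1, rfl, rfl⟩, ?_⟩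
      exact (J1Exponent_add ..).trans (by rw [Nat.sub_add_cancel hc]; rfl)
  · rintro ⟨_, ⟨a, b, c, habc, rfl⟩, _, ⟨a', b', c', habc', rfl⟩, rfl⟩
    exact ⟨a + a', b + b', c + c', by omega, (J1Exponent_add ..).symm⟩

theorem exists_J1Exponent_le_of_le_add {m a b c : ℕ} {d : Fin 2 →₀ ℕ} (habc : a + b + c = m + 2)
    (hle : J1Exponent q a b c ≤ d + Finsupp.single 1 (2 * q + 1)) :
    ∃ a' b' c', a' + b' + c' = m ∧ J1Exponent q a' b' c' ≤ d := by
  simp only [J1Exponent_le_iff, Finsupp.coe_add, Pi.add_apply, Finsupp.single_eq_same,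
    Finsupp.single_eq_of_ne zero_ne_one, add_zero] at hle ⊢
  obtain ⟨hx, hy⟩ := hle
  rcases (by omega : 2 ≤ c ∨ (c = 1 ∧ 1 ≤ b) ∨ (c = 0 ∧ 3 ≤ b) ∨ 2 * m ≤ d 0) with
    hc | ⟨rfl, hb⟩ | ⟨rfl, hb⟩ | hm
  · obtain ⟨c, rfl⟩ : ∃ c', c = c' + 2 := ⟨c - 2, by omega⟩
    exact ⟨a, b, c, by omega, by omega, by nlinarith⟩
  · obtain ⟨b, rfl⟩ : ∃ b', b = b' + 1 := ⟨b - 1, by omega⟩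
    exact ⟨a, b, 0, by omega, by omega, by nlinarith⟩
  · obtain ⟨b, rfl⟩ : ∃ b', b = b' + 3 := ⟨b - 3, by omega⟩
    exact ⟨a + 1, b, 0, by omega, by omega, by nlinarith⟩
  · exact ⟨m, 0, 0, by omega, by omega, by simp⟩

end J1Exponent

theorem J1_eq_span (q : ℕ) :
    J1 k q = Ideal.span ((fun s => monomial s (1 : k)) '' J1Exponents q 1) := by
  simp [J1, J1Exponents_one, Set.image_insert_eq, monomial_J1Exponent]

theorem J1_pow_eq_span (q m : ℕ) :
    J1 k q ^ m = Ideal.span ((fun s => monomial s (1 : k)) '' J1Exponents q m) := by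
  induction m with
  | zero => simp [J1Exponents_zero, Ideal.span_singleton_one]
  | succ m ih =>
    rw [pow_succ, ih, J1_eq_span, span_monomial_image_mul_span_monomial_image,
      ← J1Exponents_succ]

theorem stmt_4_general (q : ℕ) (m : ℕ) :
    (J1 k q ^ (m + 2)).colon ((Ideal.span {X 1 ^ (2 * q + 1)} : Ideal (MvPolynomial (Fin 2) k)) : Set (MvPolynomial (Fin 2) k)) ≤ J1 k q ^ m := by
  rw [J1_pow_eq_span, J1_pow_eq_span, X_pow_eq_monomial]
  refine colon_span_monomial_image_le fun d ⟨s, ⟨a, b, c, habc, hs⟩, hle⟩ => ?_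
  obtain ⟨a', b', c', habc', hle'⟩ := exists_J1Exponent_le_of_le_add habc (hs ▸ hle)
  exact ⟨_, ⟨a', b', c', habc', rfl⟩, hle'⟩

/-- for all m ≥ 1, (J₁^{m+2} : x₃^{2q+1}) ⊆ J₁^m. -/
theorem stmt_4 (q : ℕ) (hq : 1 ≤ q) (m : ℕ) (hm : 1 ≤ m) :
    (J1 k q ^ (m + 2)).colon ((Ideal.span {X 1 ^ (2 * q + 1)} : Ideal (MvPolynomial (Fin 2) k)) : Set (MvPolynomial (Fin 2) k)) ≤ J1 k q ^ m :=
  stmt_4_general q m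
end
end

section
/- For all n ≥ 1, the k-vector space dimension of I_{n-1}/(I_n : x₃^q) equals n. -/
noncomputable section
open MvPolynomial

variable {k : Type*} [Field k]

/-!
`I_n` is the monomial ideal of all `x₂^i x₃^j` divisible by some product of `s` copies of `x₂²`,
`t` of `x₂x₃^q`, `u` of `x₃^{q+1}` and `b` of `x₃^{2q+1}` with `s + t + u + 2b = n`. For a
monomial of `I_N`, multiplying by `x₃^q` makes room for one more such factor (by adding one, or by
a trade among them) except at the `N + 1` corners `(x₂²)^{N-c} (x₂x₃^q)^{c%2} (x₃^{2q+1})^{⌊c/2⌋}`,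
where a degree count shows that nothing fits. Hence the coefficients at these corners identify
`I_N / (I_{N+1} : x₃^q)` with `k^{N+1}`.
-/

theorem finrank_restrictScalars_quotient_of_surjective {K R M ι : Type*} [Field K] [CommRing R]
    [Algebra K R] [AddCommGroup M] [Module R M] [Module K M] [IsScalarTower K R M] [Fintype ι]
    (P : Submodule R M) (f : M →ₗ[K] ι → K) (hf : Function.Surjective f)
    (hker : ∀ x, f x = 0 ↔ x ∈ P) :
    Module.finrank K (RestrictScalars K R (M ⧸ P)) = Fintype.card ι := by
  let e : RestrictScalars K R (M ⧸ P) ≃ₗ[K] M ⧸ P :=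
    { RestrictScalars.addEquiv K R (M ⧸ P) with
      map_smul' := fun c x => algebraMap_smul R c (RestrictScalars.addEquiv K R (M ⧸ P) x) }
  have hP : P.restrictScalars K = LinearMap.ker f := by
    ext x; exact (hker x).symm
  rw [e.finrank_eq, ← (Submodule.Quotient.restrictScalarsEquiv K P).finrank_eq, hP,
    (f.quotKerEquivOfSurjective hf).finrank_eq, Module.finrank_fintype_fun_eq_card]

namespace MvPolynomial

variable {σ R : Type*} [CommSemiring R]

theorem mem_span_monomial_image_iff_support_subset {S : Set (σ →₀ ℕ)} (hS : IsUpperSet S)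
    {p : MvPolynomial σ R} :
    p ∈ Ideal.span ((fun m => monomial m (1 : R)) '' S) ↔ ↑p.support ⊆ S := by
  rw [mem_ideal_span_monomial_image]
  exact ⟨fun h m hm => by obtain ⟨e, he, hem⟩ := h m hm; exact hS hem he,
    fun h m hm => ⟨m, h hm, le_rfl⟩⟩

theorem support_mul_monomial_one (p : MvPolynomial σ R) (d : σ →₀ ℕ) :
    (p * monomial d 1).support = p.support.map (addRightEmbedding d) :=
  AddMonoidAlgebra.support_coeff_mul_single p _ (by simp) _

theorem mul_monomial_mem_span_monomial_image_iff {S : Set (σ →₀ ℕ)} (hS : IsUpperSet S)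
    (p : MvPolynomial σ R) (d : σ →₀ ℕ) :
    p * monomial d 1 ∈ Ideal.span ((fun m => monomial m (1 : R)) '' S) ↔
      ∀ m ∈ p.support, m + d ∈ S := by
  simp [mem_span_monomial_image_iff_support_subset hS, support_mul_monomial_one, Set.subset_def]

end MvPolynomial

/-- `x₂^i x₃^j` is a multiple of `(x₂²)^s (x₂x₃^q)^t (x₃^{q+1})^u (x₃^{2q+1})^b ∈ J₁^{s+t+u} J₂^b`
with `s + t + u + 2b = n`. -/
def FiltExp (q n i j : ℕ) : Prop :=
  ∃ s t u b, s + t + u + 2 * b = n ∧ 2 * s + t ≤ i ∧ q * t + (q + 1) * u + (2 * q + 1) * b ≤ j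

theorem FiltExp.mono {q n i j i' j' : ℕ} (h : FiltExp q n i j) (hi : i ≤ i') (hj : j ≤ j') :
    FiltExp q n i' j' := by
  obtain ⟨s, t, u, b, hn, hi', hj'⟩ := h
  exact ⟨s, t, u, b, hn, hi'.trans hi, hj'.trans hj⟩

theorem FiltExp.add {q n n' i i' j j' : ℕ} (h : FiltExp q n i j) (h' : FiltExp q n' i' j') :
    FiltExp q (n + n') (i + i') (j + j') := by
  obtain ⟨s, t, u, b, hn, hi, hj⟩ := h
  obtain ⟨s', t', u', b', hn', hi', hj'⟩ := h'
  exact ⟨s + s', t + t', u + u', b + b', by omega, by omega, by nlinarith⟩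

def filtSupp (q n : ℕ) : Set (Fin 2 →₀ ℕ) :=
  {m | FiltExp q n (m 0) (m 1)}

theorem isUpperSet_filtSupp (q n : ℕ) : IsUpperSet (filtSupp q n) :=
  fun _ _ hle h => h.mono (hle 0) (hle 1)

def filtMonomialIdeal (k : Type*) [Field k] (q n : ℕ) : Ideal (MvPolynomial (Fin 2) k) :=
  Ideal.span ((fun m => monomial m (1 : k)) '' filtSupp q n)

theorem X_pow_mul_X_pow_mem_filtMonomialIdeal {q n i j : ℕ} (h : FiltExp q n i j) :
    X 0 ^ i * X 1 ^ j ∈ filtMonomialIdeal k q n := by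
  rw [X_pow_eq_monomial, X_pow_eq_monomial, monomial_mul, one_mul]
  exact Ideal.subset_span ⟨_, by simpa [filtSupp] using h, rfl⟩

theorem filtMonomialIdeal_mul_le (q n n' : ℕ) :
    filtMonomialIdeal k q n * filtMonomialIdeal k q n' ≤ filtMonomialIdeal k q (n + n') := by
  rw [filtMonomialIdeal, filtMonomialIdeal, Ideal.span_mul_span', Ideal.span_le]
  rintro _ ⟨_, ⟨m, hm, rfl⟩, _, ⟨m', hm', rfl⟩, rfl⟩
  dsimp only
  rw [monomial_mul, one_mul]
  exact Ideal.subset_span ⟨_, by simpa [filtSupp] using hm.add hm', rfl⟩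

theorem filtMonomialIdeal_pow_le (q n a : ℕ) :
    filtMonomialIdeal k q n ^ a ≤ filtMonomialIdeal k q (n * a) := by
  induction a with
  | zero =>
    rw [pow_zero, Ideal.one_eq_top, top_le_iff, Ideal.eq_top_iff_one]
    simpa using
      X_pow_mul_X_pow_mem_filtMonomialIdeal (k := k) (⟨0, 0, 0, 0, by simp⟩ : FiltExp q 0 0 0)
  | succ a ih =>
    rw [pow_succ]
    exact (Ideal.mul_mono_left ih).trans (filtMonomialIdeal_mul_le q _ _)

theorem J1_le_filtMonomialIdeal (q : ℕ) : J1 k q ≤ filtMonomialIdeal k q 1 := by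
  rw [J1, Ideal.span_le]
  rintro _ (rfl | rfl | rfl)
  · simpa using
      X_pow_mul_X_pow_mem_filtMonomialIdeal (k := k) (⟨1, 0, 0, 0, by simp⟩ : FiltExp q 1 2 0)
  · simpa using
      X_pow_mul_X_pow_mem_filtMonomialIdeal (k := k) (⟨0, 1, 0, 0, by simp⟩ : FiltExp q 1 1 q)
  · simpa using
      X_pow_mul_X_pow_mem_filtMonomialIdeal (k := k) (⟨0, 0, 1, 0, by simp⟩ : FiltExp q 1 0 (q + 1))

theorem J2_le_filtMonomialIdeal (q : ℕ) : J2 k q ≤ filtMonomialIdeal k q 2 := by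
  rw [J2, Ideal.span_le, Set.singleton_subset_iff]
  simpa using
    X_pow_mul_X_pow_mem_filtMonomialIdeal (k := k)
      (⟨0, 0, 0, 1, by simp⟩ : FiltExp q 2 0 (2 * q + 1))

theorem monomial_mem_filtI {q n : ℕ} {m : Fin 2 →₀ ℕ} (hm : m ∈ filtSupp q n) :
    monomial m (1 : k) ∈ filtI k q n := by
  obtain ⟨s, t, u, b, hn, hi, hj⟩ := hm
  obtain ⟨i, hi⟩ := Nat.exists_eq_add_of_le hi
  obtain ⟨j, hj⟩ := Nat.exists_eq_add_of_le hj
  have hprod :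
      (X 0 ^ 2) ^ s * (X 0 * X 1 ^ q) ^ t * (X 1 ^ (q + 1)) ^ u ∈ J1 k q ^ (s + t + u) := by
    rw [pow_add, pow_add]
    refine Ideal.mul_mem_mul (Ideal.mul_mem_mul ?_ ?_) ?_ <;>
      exact Ideal.pow_mem_pow (Ideal.subset_span (by simp)) _
  have hgen : (X 1 ^ (2 * q + 1)) ^ b ∈ J2 k q ^ b :=
    Ideal.pow_mem_pow (Ideal.subset_span (Set.mem_singleton _)) b
  have hmono : monomial m (1 : k) = X 0 ^ i * X 1 ^ j *
      ((X 0 ^ 2) ^ s * (X 0 * X 1 ^ q) ^ t * (X 1 ^ (q + 1)) ^ u * (X 1 ^ (2 * q + 1)) ^ b) := by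
    rw [monomial_fin_two, C_1, hi, hj]
    ring
  rw [hmono]
  refine Ideal.mul_mem_left _ _ ?_
  exact Submodule.mem_iSup_of_mem (s + t + u, b)
    (Submodule.mem_iSup_of_mem (by simpa using hn) (Ideal.mul_mem_mul hprod hgen))

theorem filtI_eq_filtMonomialIdeal (q n : ℕ) : filtI k q n = filtMonomialIdeal k q n := by
  refine le_antisymm (iSup₂_le fun a ha => ?_) (Ideal.span_le.mpr ?_)
  · calc J1 k q ^ a.1 * J2 k q ^ a.2
        ≤ filtMonomialIdeal k q (1 * a.1) * filtMonomialIdeal k q (2 * a.2) :=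
          Ideal.mul_mono
            ((Ideal.pow_right_mono (J1_le_filtMonomialIdeal q) _).trans
              (filtMonomialIdeal_pow_le q 1 _))
            ((Ideal.pow_right_mono (J2_le_filtMonomialIdeal q) _).trans
              (filtMonomialIdeal_pow_le q 2 _))
      _ ≤ _ := by simpa [← ha] using filtMonomialIdeal_mul_le (k := k) q (1 * a.1) (2 * a.2)
  · rintro _ ⟨m, hm, rfl⟩
    exact monomial_mem_filtI hm

theorem mem_filtI_iff {q n : ℕ} {p : MvPolynomial (Fin 2) k} :
    p ∈ filtI k q n ↔ ↑p.support ⊆ filtSupp q n := by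
  rw [filtI_eq_filtMonomialIdeal, filtMonomialIdeal,
    mem_span_monomial_image_iff_support_subset (isUpperSet_filtSupp q n)]

/-- Unless `x₂^i x₃^j` is one of the corners `(x₂²)^{N-c} (x₂x₃^q)^{c%2} (x₃^{2q+1})^{⌊c/2⌋}`,
one more generator fits after multiplying by `x₃^q`: raise `t` if `x₂` is to spare, else
trade `x₃^{q+1} ↦ x₃^{2q+1}`, else add `x₃^{q+1}` if `x₃` is to spare, else trade
`(x₂x₃^q)² ↦ x₂² x₃^{2q+1}`. -/
theorem FiltExp.succ_or_corner {q N i j : ℕ} (hq : 1 ≤ q) (h : FiltExp q N i j) :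
    FiltExp q (N + 1) i (j + q) ∨
      ∃ c ≤ N, i = 2 * (N - c) + c % 2 ∧ j = (2 * q + 1) * (c / 2) + q * (c % 2) := by
  obtain ⟨s, t, u, b, hN, hi, hj⟩ := h
  by_cases hi' : 2 * s + t < i
  · exact .inl ⟨s, t + 1, u, b, by omega, by omega, by nlinarith⟩
  rcases u with _ | u
  · by_cases hj' : q * t + (2 * q + 1) * b < j
    · exact .inl ⟨s, t, 1, b, by omega, by omega, by nlinarith⟩
    rcases Nat.lt_or_ge t 2 with ht | ht
    · exact .inr ⟨2 * b + t, by omega, by omega, by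
        rw [show (2 * b + t) / 2 = b by omega, show (2 * b + t) % 2 = t by omega]; nlinarith⟩
    · obtain ⟨t, rfl⟩ := Nat.exists_eq_add_of_le' ht
      exact .inl ⟨s + 1, t, 0, b + 1, by omega, by omega, by nlinarith⟩
  · exact .inl ⟨s, t, u, b + 1, by omega, by omega, by nlinarith⟩

theorem not_filtExp_succ_corner {q N c : ℕ} (hq : 1 ≤ q) (hc : c ≤ N) :
    ¬ FiltExp q (N + 1) (2 * (N - c) + c % 2) ((2 * q + 1) * (c / 2) + q * (c % 2) + q) := by
  rintro ⟨s, t, u, b, hN, hi, hj⟩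
  -- with `d = N - c - s`, the `x₃`-degree gives `q d + u + b ≤ ⌊c/2⌋` and the `x₂`-degree gives
  -- `2⌊c/2⌋ + 1 ≤ d + u + 2b`, whence `2 q d < d`
  obtain ⟨d, hd⟩ : ∃ d, N - c = s + d := Nat.exists_eq_add_of_le (by omega)
  have hsum : t + u + 2 * b = d + 2 * (c / 2) + c % 2 + 1 := by omega
  have hqsum : q * (t + u + 2 * b) = q * (d + 2 * (c / 2) + c % 2 + 1) := by rw [hsum]
  have hqd : d ≤ q * d := Nat.le_mul_of_pos_left d hq
  nlinarith

/-- `(x₂²)^{N-c} (x₂x₃^q)^{c%2} (x₃^{2q+1})^{⌊c/2⌋}`: the monomials of `I_N` that `x₃^q` does not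
carry into `I_{N+1}`. -/
def cornerExp (q N : ℕ) (c : Fin (N + 1)) : Fin 2 →₀ ℕ :=
  Finsupp.single 0 (2 * (N - c) + c % 2) + Finsupp.single 1 ((2 * q + 1) * (c / 2) + q * (c % 2))

theorem cornerExp_injective (q N : ℕ) : Function.Injective (cornerExp q N) := by
  intro c c' h
  have h0 := congrArg (· 0) h
  simp only [cornerExp, Finsupp.add_apply, Finsupp.single_eq_same,
    Finsupp.single_eq_of_ne (show (0 : Fin 2) ≠ 1 by decide), add_zero] at h0
  omega

theorem cornerExp_mem_filtSupp (q N : ℕ) (c : Fin (N + 1)) : cornerExp q N c ∈ filtSupp q N :=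
  ⟨N - c, c % 2, 0, c / 2, by omega, by simp [cornerExp], by simp [cornerExp, add_comm]⟩

theorem add_single_mem_filtSupp_succ_iff {q N : ℕ} (hq : 1 ≤ q) {m : Fin 2 →₀ ℕ}
    (hm : m ∈ filtSupp q N) :
    m + Finsupp.single 1 q ∈ filtSupp q (N + 1) ↔ ∀ c, m ≠ cornerExp q N c := by
  constructor
  · rintro h c rfl
    exact not_filtExp_succ_corner hq (Nat.le_of_lt_succ c.2)
      (by simpa [filtSupp, cornerExp] using h)
  · intro h
    rcases hm.succ_or_corner hq with h' | ⟨c, hc, hi, hj⟩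
    · simpa [filtSupp] using h'
    · refine absurd ?_ (h ⟨c, Nat.lt_succ_of_le hc⟩)
      ext i
      fin_cases i <;> simp [cornerExp, hi, hj]

theorem mem_colon_filtI_succ_iff {q N : ℕ} (hq : 1 ≤ q) {p : MvPolynomial (Fin 2) k}
    (hp : p ∈ filtI k q N) :
    p ∈ (filtI k q (N + 1)).colon (Ideal.span {X 1 ^ q} : Ideal (MvPolynomial (Fin 2) k)) ↔
      ∀ c, coeff (cornerExp q N c) p = 0 := by
  rw [Submodule.mem_colon_span_singleton, smul_eq_mul, X_pow_eq_monomial,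
    filtI_eq_filtMonomialIdeal, filtMonomialIdeal,
    mul_monomial_mem_span_monomial_image_iff (isUpperSet_filtSupp q _)]
  rw [mem_filtI_iff] at hp
  constructor
  · intro h c
    by_contra hc
    have hm := mem_support_iff.mpr hc
    exact (add_single_mem_filtSupp_succ_iff hq (hp hm)).mp (h _ hm) c rfl
  · intro h m hm
    refine (add_single_mem_filtSupp_succ_iff hq (hp hm)).mpr fun c hmc => ?_
    exact mem_support_iff.mp hm (hmc ▸ h c)

def cornerCoeffs (q N : ℕ) : filtI k q N →ₗ[k] Fin (N + 1) → k :=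
  LinearMap.pi fun c => (lcoeff k (cornerExp q N c)).comp ((filtI k q N).subtype.restrictScalars k)

theorem cornerCoeffs_surjective (q N : ℕ) : Function.Surjective (cornerCoeffs (k := k) q N) := by
  intro v
  refine ⟨⟨∑ c, monomial (cornerExp q N c) (v c), Ideal.sum_mem _ fun c _ => ?_⟩, ?_⟩
  · rw [← mul_one (v c), ← C_mul_monomial]
    exact Ideal.mul_mem_left _ _ (monomial_mem_filtI (cornerExp_mem_filtSupp q N c))
  · ext c
    simp [cornerCoeffs, coeff_monomial, (cornerExp_injective q N).eq_iff]

theorem finrank_filtI_quotient_colon {q : ℕ} (hq : 1 ≤ q) (N : ℕ) :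
    Module.finrank k
      (RestrictScalars k (MvPolynomial (Fin 2) k)
        (↥(filtI k q N) ⧸
          Submodule.comap (filtI k q N).subtype
            ((filtI k q (N + 1)).colon
              (Ideal.span {X 1 ^ q} : Ideal (MvPolynomial (Fin 2) k))))) = N + 1 := by
  rw [finrank_restrictScalars_quotient_of_surjective _ _ (cornerCoeffs_surjective q N),
    Fintype.card_fin]
  intro p
  rw [Submodule.mem_comap, Submodule.subtype_apply, mem_colon_filtI_succ_iff hq p.2, funext_iff]
  rfl

/-- for all n ≥ 1, the k-vector space dimension of
I_{n-1}/(Iₙ : x₃^q) equals n. -/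
theorem stmt_8 (q : ℕ) (hq : 1 ≤ q) (n : ℕ) (hn : 1 ≤ n) :
    Module.finrank k
      (RestrictScalars k (MvPolynomial (Fin 2) k)
        (↥(filtI k q (n - 1)) ⧸
          Submodule.comap (filtI k q (n - 1)).subtype
            ((filtI k q n).colon (Ideal.span {X 1 ^ q} : Ideal (MvPolynomial (Fin 2) k))))) = n := by
  obtain ⟨N, rfl⟩ := Nat.exists_eq_add_of_le' hn
  exact finrank_filtI_quotient_colon hq N
end
end
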